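/- Fix integers n ≥ 1, 0 ≤ θ_1 < θ_2 ≤ n-1, and let p* = 1/(1 + ((n-θ_2)C(n,θ_2)/((n-θ_1)C(n,θ_1)))^{1/(θ_2-θ_1)}). Then G_B(p) = F_B(θ_2; n, p) - F_B(θ_1; n, p) is increasing on (0, p*] and decreasing on [p*, 1), where F_B is the Binomial(n,p) CDF. -/

import Mathlib

/-!
Each summand of the binomial CDF is a Bernstein polynomial, and the Bernstein derivative formula
makes the derivative of the CDF telescope to `-(n - θ) C(n, θ) p^θ (1 - p)^(n - 1 - θ)`. Hence,
with `d = θ₂ - θ₁`, `G'(p) = p^θ₁ (1 - p)^(n - 1 - θ₂) (a (1 - p)^d - b p^d)` for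
`a = (n - θ₁) C(n, θ₁)`, `b = (n - θ₂) C(n, θ₂)`, and the last factor is nonnegative exactly when
`((1 - p) / p)^d ≥ b / a`, i.e. when `p ≤ p*`.
-/

open Finset Polynomial

def binomCDF (n θ : ℕ) (p : ℝ) : ℝ :=
  ∑ i ∈ range (θ + 1), (n.choose i : ℝ) * p ^ i * (1 - p) ^ (n - i)

lemma binomCDF_eq_eval (n θ : ℕ) (p : ℝ) :
    binomCDF n θ p = (∑ i ∈ range (θ + 1), bernsteinPolynomial ℝ n i).eval p := by
  simp [binomCDF, bernsteinPolynomial, eval_finsetSum]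

lemma derivative_sum_bernsteinPolynomial (n θ : ℕ) :
    derivative (∑ i ∈ range (θ + 1), bernsteinPolynomial ℝ n i) =
      -n * bernsteinPolynomial ℝ (n - 1) θ := by
  induction θ with
  | zero => simp [bernsteinPolynomial.derivative_zero]
  | succ θ ih =>
    rw [sum_range_succ, derivative_add, ih, bernsteinPolynomial.derivative_succ]
    ring

lemma natCast_mul_choose_pred (n θ : ℕ) :
    (n : ℝ) * ((n - 1).choose θ : ℝ) = ((n : ℝ) - θ) * (n.choose θ : ℝ) := by
  rcases n with _ | m
  · rcases θ with _ | θ <;> simp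
  rcases le_or_gt θ (m + 1) with hθ | hθ
  · rw [Nat.add_sub_cancel, ← Nat.cast_sub hθ, mul_comm, mul_comm ((_ - _ : ℕ) : ℝ)]
    exact_mod_cast Nat.choose_mul_succ_eq m θ
  · simp [Nat.choose_eq_zero_of_lt hθ, Nat.choose_eq_zero_of_lt (by omega : m < θ)]

lemma hasDerivAt_binomCDF (n θ : ℕ) (p : ℝ) :
    HasDerivAt (binomCDF n θ)
      (-(((n : ℝ) - θ) * n.choose θ * p ^ θ * (1 - p) ^ (n - 1 - θ))) p := by
  have h := (∑ i ∈ range (θ + 1), bernsteinPolynomial ℝ n i).hasDerivAt p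
  rw [derivative_sum_bernsteinPolynomial, ← funext (binomCDF_eq_eval n θ)] at h
  refine h.congr_deriv ?_
  simp only [bernsteinPolynomial, neg_mul, eval_neg, eval_mul, eval_natCast, eval_pow, eval_X,
    eval_sub, eval_one, neg_inj]
  rw [← natCast_mul_choose_pred]
  ring

lemma mul_pow_le_mul_one_sub_pow_iff {a b p : ℝ} {d : ℕ} (ha : 0 < a) (hb : 0 ≤ b) (hd : d ≠ 0)
    (hp : 0 < p) (hp1 : p ≤ 1) :
    b * p ^ d ≤ a * (1 - p) ^ d ↔ p ≤ 1 / (1 + (b / a) ^ ((d : ℝ)⁻¹)) := by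
  set s := (b / a) ^ ((d : ℝ)⁻¹)
  have hs : 0 ≤ s := by positivity
  calc b * p ^ d ≤ a * (1 - p) ^ d ↔ b / a ≤ ((1 - p) / p) ^ d := by
        rw [div_pow, div_le_div_iff₀ ha (by positivity)]; constructor <;> intro h <;> linarith
    _ ↔ s ≤ (1 - p) / p := by
        have : 0 ≤ (1 - p) / p := div_nonneg (by linarith) hp.le
        rw [Real.rpow_inv_le_iff_of_pos (by positivity) this (by positivity), Real.rpow_natCast]
    _ ↔ p ≤ 1 / (1 + s) := by
        rw [le_div_iff₀ hp, le_div_iff₀ (by positivity)]; constructor <;> intro h <;> linarith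

lemma hasDerivAt_binomCDF_sub {n θ1 θ2 : ℕ} (h12 : θ1 ≤ θ2) (h2 : θ2 ≤ n - 1) (p : ℝ) :
    HasDerivAt (fun q => binomCDF n θ2 q - binomCDF n θ1 q)
      (p ^ θ1 * (1 - p) ^ (n - 1 - θ2) *
        (((n : ℝ) - θ1) * n.choose θ1 * (1 - p) ^ (θ2 - θ1) -
          ((n : ℝ) - θ2) * n.choose θ2 * p ^ (θ2 - θ1))) p := by
  refine ((hasDerivAt_binomCDF n θ2 p).sub (hasDerivAt_binomCDF n θ1 p)).congr_deriv ?_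
  obtain ⟨d, rfl⟩ := Nat.exists_eq_add_of_le h12
  obtain ⟨m, hm⟩ := Nat.exists_eq_add_of_le h2
  rw [show n - 1 - θ1 = m + d by omega, hm, Nat.add_sub_cancel_left, Nat.add_sub_cancel_left]
  ring

theorem stmt8_general (n θ1 θ2 : ℕ) (h1 : θ1 < θ2) (h2 : θ2 ≤ n - 1) :
    let G : ℝ → ℝ :=
      fun p =>
        (∑ i ∈ Finset.range (θ2 + 1), (n.choose i : ℝ) * p ^ i * (1 - p) ^ (n - i)) -
          ∑ i ∈ Finset.range (θ1 + 1), (n.choose i : ℝ) * p ^ i * (1 - p) ^ (n - i)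
    let pStar : ℝ :=
      1 / (1 + ((((n : ℝ) - θ2) * (n.choose θ2 : ℝ)) / (((n : ℝ) - θ1) * (n.choose θ1 : ℝ))) ^
        (((θ2 : ℝ) - θ1)⁻¹))
    MonotoneOn G (Set.Ioc 0 pStar) ∧ AntitoneOn G (Set.Ico pStar 1) := by
  intro G pStar
  set a : ℝ := ((n : ℝ) - θ1) * n.choose θ1
  set b : ℝ := ((n : ℝ) - θ2) * n.choose θ2
  have hθ1 : (θ1 : ℝ) < n := by exact_mod_cast (by omega : θ1 < n)
  have hθ2 : (θ2 : ℝ) < n := by exact_mod_cast (by omega : θ2 < n)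
  have ha : 0 < a := mul_pos (by linarith) (by exact_mod_cast Nat.choose_pos (by omega))
  have hb : 0 ≤ b := mul_nonneg (by linarith) (Nat.cast_nonneg _)
  have hd : θ2 - θ1 ≠ 0 := by omega
  have hpStar : pStar = 1 / (1 + (b / a) ^ (((θ2 - θ1 : ℕ) : ℝ)⁻¹)) := by
    rw [Nat.cast_sub h1.le]
  have hpStar_pos : 0 < pStar := by rw [hpStar]; positivity
  have hpStar_le_one : pStar ≤ 1 := by
    rw [hpStar]; exact div_le_one_of_le₀ (le_add_of_nonneg_right (by positivity)) (by positivity)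
  have hG (p : ℝ) := hasDerivAt_binomCDF_sub (n := n) h1.le h2 p
  have hGc : Continuous G := continuous_iff_continuousAt.2 fun p => (hG p).continuousAt
  constructor
  · refine monotoneOn_of_hasDerivWithinAt_nonneg (convex_Ioc _ _) hGc.continuousOn
      (fun p _ => (hG p).hasDerivWithinAt) ?_
    rw [interior_Ioc]
    rintro p ⟨hp0, hp⟩
    have hsign := (mul_pow_le_mul_one_sub_pow_iff ha hb hd hp0 (by linarith)).2 (hpStar ▸ hp.le)
    exact mul_nonneg (mul_nonneg (by positivity) (pow_nonneg (by linarith) _)) (sub_nonneg.2 hsign)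
  · refine antitoneOn_of_hasDerivWithinAt_nonpos (convex_Ico _ _) hGc.continuousOn
      (fun p _ => (hG p).hasDerivWithinAt) ?_
    rw [interior_Ico]
    rintro p ⟨hp, hp1⟩
    have hp0 : 0 < p := hpStar_pos.trans hp
    have hsign := not_le.1 <| mt (mul_pow_le_mul_one_sub_pow_iff ha hb hd hp0 hp1.le).1
      (not_le.2 (hpStar ▸ hp))
    exact mul_nonpos_of_nonneg_of_nonpos (mul_nonneg (by positivity) (pow_nonneg (by linarith) _))
      (sub_nonpos.2 hsign.le)

theorem stmt8 (n θ1 θ2 : ℕ) (hn : 1 ≤ n) (h1 : θ1 < θ2) (h2 : θ2 ≤ n - 1) :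
    let G : ℝ → ℝ :=
      fun p =>
        (∑ i ∈ Finset.range (θ2 + 1), (n.choose i : ℝ) * p ^ i * (1 - p) ^ (n - i)) -
          ∑ i ∈ Finset.range (θ1 + 1), (n.choose i : ℝ) * p ^ i * (1 - p) ^ (n - i)
    let pStar : ℝ :=
      1 / (1 + ((((n : ℝ) - θ2) * (n.choose θ2 : ℝ)) / (((n : ℝ) - θ1) * (n.choose θ1 : ℝ))) ^
        (((θ2 : ℝ) - θ1)⁻¹))
    MonotoneOn G (Set.Ioc 0 pStar) ∧ AntitoneOn G (Set.Ico pStar 1) :=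
  stmt8_general n θ1 θ2 h1 h2
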